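/- ∑_{n≥1} (9·t_{n-1} + 7·t_n)/n³ = 8·ζ(3), where ζ is the Riemann zeta function. -/
import Mathlib


open Complex

/-- The Thue-Morse sequence: binary digit sum of `n` modulo 2. -/
def tm (n : ℕ) : ℕ := (Nat.digits 2 n).sum % 2

/-- The ±1 Thue-Morse sequence `ε n = (-1)^(t n)`. -/
noncomputable def eps (n : ℕ) : ℂ := (-1) ^ tm n

lemma tm_two_mul (n : ℕ) : tm (2 * n) = tm n := by
  rcases Nat.eq_zero_or_pos n with h | h
  · simp [h]
  · unfold tm
    rw [Nat.digits_def' (by norm_num : 1 < 2) (by omega)]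
    simp [Nat.mul_div_cancel_left, Nat.mul_mod_right]

lemma tm_two_mul_add_one (n : ℕ) : tm (2 * n + 1) = (1 + tm n) % 2 := by
  unfold tm
  rw [Nat.digits_def' (by norm_num : 1 < 2) (by omega)]
  have h1 : (2 * n + 1) % 2 = 1 := by omega
  have h2 : (2 * n + 1) / 2 = n := by omega
  rw [h1, h2]
  simp [Nat.add_mod]

lemma eps_two_mul (n : ℕ) : eps (2 * n) = eps n := by
  unfold eps; rw [tm_two_mul]

lemma eps_two_mul_add_one (n : ℕ) : eps (2 * n + 1) = -eps n := by
  unfold eps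
  rw [tm_two_mul_add_one]
  rcases Nat.mod_two_eq_zero_or_one ((Nat.digits 2 n).sum) with h | h <;>
    simp [tm, h, Nat.add_mod]

lemma tm_lt_two (n : ℕ) : tm n < 2 := Nat.mod_lt _ (by norm_num)

lemma tm_eq (n : ℕ) : (tm n : ℂ) = (1 - eps n) / 2 := by
  have h := tm_lt_two n
  interval_cases h : tm n <;> simp_all [eps] <;> norm_num

lemma summable_aux (c : ℕ → ℂ) (hc : ∀ n, ‖c n‖ ≤ 1) (d : ℕ → ℂ)
    (hd : ∀ n : ℕ, ((n : ℝ) + 1) ^ 3 ≤ ‖d n‖) :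
    Summable fun n => c n / d n := by
  apply Summable.of_norm
  have hs : Summable fun n : ℕ => 1 / ((n : ℝ) + 1) ^ 3 := by
    have := (summable_nat_add_iff 1).mpr
      (Real.summable_one_div_nat_pow.mpr (by norm_num : 1 < 3))
    simpa [add_comm] using this
  apply Summable.of_nonneg_of_le (fun n => norm_nonneg _) _ hs
  intro n
  have hpos : (0 : ℝ) < ((n : ℝ) + 1) ^ 3 := by positivity
  rw [norm_div]
  calc ‖c n‖ / ‖d n‖ ≤ 1 / (((n : ℝ) + 1) ^ 3) := by
        apply div_le_div₀ (by norm_num) (hc n) hpos (hd n)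

lemma eps_norm (n : ℕ) : ‖eps n‖ ≤ 1 := by
  unfold eps
  rcases Nat.mod_two_eq_zero_or_one ((Nat.digits 2 n).sum) with h | h <;>
    simp [tm, h]

lemma denom_norm (n : ℕ) : ((n : ℝ) + 1) ^ 3 ≤ ‖((n : ℂ) + 1) ^ 3‖ := by
  rw [norm_pow]
  have : ((n : ℂ) + 1) = ((n + 1 : ℕ) : ℂ) := by push_cast; ring
  rw [this, Complex.norm_natCast]
  push_cast
  exact le_refl _

lemma denom2_norm (n : ℕ) : ((n : ℝ) + 1) ^ 3 ≤ ‖(2 * (n : ℂ) + 1) ^ 3‖ := by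
  rw [norm_pow]
  have : (2 * (n : ℂ) + 1) = ((2 * n + 1 : ℕ) : ℂ) := by push_cast; ring
  rw [this, Complex.norm_natCast]
  push_cast
  apply pow_le_pow_left₀ (by positivity)
  linarith [Nat.cast_nonneg (α := ℝ) n]

noncomputable def AA : ℂ := ∑' n : ℕ, eps n / ((n : ℂ) + 1) ^ 3
noncomputable def BB : ℂ := ∑' n : ℕ, eps (n + 1) / ((n : ℂ) + 1) ^ 3
noncomputable def TT : ℂ := ∑' n : ℕ, eps n / (2 * (n : ℂ) + 1) ^ 3

lemma sumA : Summable (fun n : ℕ => eps n / ((n : ℂ) + 1) ^ 3) :=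
  summable_aux _ eps_norm _ denom_norm

lemma sumB : Summable (fun n : ℕ => eps (n + 1) / ((n : ℂ) + 1) ^ 3) :=
  summable_aux _ (fun n => eps_norm _) _ denom_norm

lemma sumH : Summable (fun n : ℕ => 1 / ((n : ℂ) + 1) ^ 3) :=
  summable_aux (fun _ => 1) (by simp) _ denom_norm

lemma hinj2 : Function.Injective (fun k : ℕ => 2 * k) := by
  intro a b h; dsimp only at h; omega
lemma hinj2' : Function.Injective (fun k : ℕ => 2 * k + 1) := by
  intro a b h; dsimp only at h; omega

lemma hA : AA = TT - 8⁻¹ * AA := by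
  have h := tsum_even_add_odd (f := fun n : ℕ => eps n / ((n : ℂ) + 1) ^ 3)
      (sumA.comp_injective hinj2) (sumA.comp_injective hinj2')
  have e1 : ∑' k : ℕ, eps (2 * k) / (((2 * k : ℕ) : ℂ) + 1) ^ 3 = TT := by
    apply tsum_congr; intro k
    rw [eps_two_mul]; push_cast; ring_nf
  have e2 : ∑' k : ℕ, eps (2 * k + 1) / (((2 * k + 1 : ℕ) : ℂ) + 1) ^ 3 = -8⁻¹ * AA := by
    have hpt : ∀ k : ℕ, eps (2 * k + 1) / (((2 * k + 1 : ℕ) : ℂ) + 1) ^ 3 =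
        -8⁻¹ * (eps k / ((k : ℂ) + 1) ^ 3) := by
      intro k
      have hd : (((2 * k + 1 : ℕ) : ℂ) + 1) ^ 3 = 8 * ((k : ℂ) + 1) ^ 3 := by
        push_cast; ring
      have hk : ((k : ℂ) + 1) ≠ 0 := Nat.cast_add_one_ne_zero k
      rw [eps_two_mul_add_one, hd]
      field_simp
    rw [tsum_congr hpt, tsum_mul_left]; rfl
  rw [e1, e2] at h
  have hAA : (∑' k : ℕ, (fun n : ℕ => eps n / ((n : ℂ) + 1) ^ 3) k) = AA := rfl
  rw [hAA] at h
  linear_combination -h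

lemma hB : BB = -TT + 8⁻¹ * BB := by
  have h := tsum_even_add_odd (f := fun n : ℕ => eps (n + 1) / ((n : ℂ) + 1) ^ 3)
      (sumB.comp_injective hinj2) (sumB.comp_injective hinj2')
  have e1 : ∑' k : ℕ, eps (2 * k + 1) / (((2 * k : ℕ) : ℂ) + 1) ^ 3 = -TT := by
    have hpt : ∀ k : ℕ, eps (2 * k + 1) / (((2 * k : ℕ) : ℂ) + 1) ^ 3 =
        -1 * (eps k / (2 * (k : ℂ) + 1) ^ 3) := by
      intro k
      rw [eps_two_mul_add_one]; push_cast; ring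
    rw [tsum_congr hpt, tsum_mul_left]
    have : (∑' n : ℕ, eps n / (2 * (n : ℂ) + 1) ^ 3) = TT := rfl
    rw [this]; ring
  have e2 : ∑' k : ℕ, eps (2 * k + 1 + 1) / (((2 * k + 1 : ℕ) : ℂ) + 1) ^ 3 = 8⁻¹ * BB := by
    have hpt : ∀ k : ℕ, eps (2 * k + 1 + 1) / (((2 * k + 1 : ℕ) : ℂ) + 1) ^ 3 =
        8⁻¹ * (eps (k + 1) / ((k : ℂ) + 1) ^ 3) := by
      intro k
      have hd : (((2 * k + 1 : ℕ) : ℂ) + 1) ^ 3 = 8 * ((k : ℂ) + 1) ^ 3 := by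
        push_cast; ring
      have hk : ((k : ℂ) + 1) ≠ 0 := Nat.cast_add_one_ne_zero k
      rw [show 2 * k + 1 + 1 = 2 * (k + 1) by ring, eps_two_mul, hd]
      field_simp
    rw [tsum_congr hpt, tsum_mul_left]; rfl
  rw [e1, e2] at h
  have hBB : (∑' k : ℕ, (fun n : ℕ => eps (n + 1) / ((n : ℂ) + 1) ^ 3) k) = BB := rfl
  rw [hBB] at h
  linear_combination -h

lemma key : 9 * AA + 7 * BB = 0 := by
  linear_combination 8 * hA + 8 * hB

theorem stmt_10 :
    ∑' n : ℕ, (9 * (tm n : ℂ) + 7 * (tm (n + 1) : ℂ)) / ((n : ℂ) + 1) ^ 3 =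
      8 * riemannZeta 3 := by
  have hzeta : riemannZeta 3 = ∑' n : ℕ, 1 / ((n : ℂ) + 1) ^ 3 := by
    rw [zeta_eq_tsum_one_div_nat_add_one_cpow (by norm_num)]
    apply tsum_congr; intro n
    rw [show (3 : ℂ) = ((3 : ℕ) : ℂ) by norm_num, cpow_natCast]
  have hpt : ∀ n : ℕ, (9 * (tm n : ℂ) + 7 * (tm (n + 1) : ℂ)) / ((n : ℂ) + 1) ^ 3 =
      8 * (1 / ((n : ℂ) + 1) ^ 3) + (-(9/2)) * (eps n / ((n : ℂ) + 1) ^ 3)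
        + (-(7/2)) * (eps (n + 1) / ((n : ℂ) + 1) ^ 3) := by
    intro n
    have hk : ((n : ℂ) + 1) ≠ 0 := Nat.cast_add_one_ne_zero n
    rw [tm_eq, tm_eq]
    ring
  rw [tsum_congr hpt]
  rw [Summable.tsum_add (Summable.add (sumH.mul_left 8) (sumA.mul_left (-(9/2))))
      (sumB.mul_left (-(7/2))),
      Summable.tsum_add (sumH.mul_left 8) (sumA.mul_left (-(9/2))),
      tsum_mul_left, tsum_mul_left, tsum_mul_left]
  rw [hzeta]
  have hk := key
  rw [show AA = ∑' n : ℕ, eps n / ((n : ℂ) + 1) ^ 3 from rfl,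
     show BB = ∑' n : ℕ, eps (n + 1) / ((n : ℂ) + 1) ^ 3 from rfl] at hk
  linear_combination (-(1/2)) * hk
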